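/- (Theorem 5.2(iii), two decision makers.) If the static policy (γ₁*, δ₂*) with δ₂* : Y₁ × Ŷ → U₂ is person-by-person optimal for J^S (i.e., J^S(γ₁*, δ₂*) ≤ J^S(γ₁, δ₂*) for every measurable γ₁ : Y₁ → U₁ and J^S(γ₁*, δ₂*) ≤ J^S(γ₁*, δ₂) for every measurable δ₂ : Y₁ × Ŷ → U₂), then the control-sharing static policy (γ₁*; δ̃₂*), where δ̃₂*(y, u, s) := δ₂*(y, s) ignores the shared action, is person-by-person optimal for J^{CS}: J^{CS}(γ₁*, δ̃₂*) ≤ J^{CS}(γ₁, δ̃₂*) for every measurable γ₁, and J^{CS}(γ₁*, δ̃₂*) ≤ J^{CS}(γ₁*, β) for every measurable β : Y₁ × U₁ × Ŷ → U₂. -/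

import Mathlib

/-! Under a fixed policy `γ₁` of the first decision maker the shared action `γ₁ (y₁ ω)` is a
function of `y₁ ω`, so every control-sharing policy `β` of the second one costs as much as the
static policy `(y, s) ↦ β (y, γ₁ y, s)`. Hence control sharing gives the second decision maker no
new deviations, while a policy ignoring the shared action has the same cost in both problems. -/

open MeasureTheory
open scoped ENNReal

section SubstituteAction

variable {Y₁ Yh U₁ U₂ : Type*}

def substituteAction (γ₁ : Y₁ → U₁) (β : Y₁ × U₁ × Yh → U₂) : Y₁ × Yh → U₂ :=
  fun p => β (p.1, γ₁ p.1, p.2)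

@[simp]
theorem substituteAction_of_ignoring (γ₁ : Y₁ → U₁) (δ₂ : Y₁ × Yh → U₂) :
    substituteAction γ₁ (fun q => δ₂ (q.1, q.2.2)) = δ₂ :=
  rfl

theorem Measurable.substituteAction [MeasurableSpace Y₁] [MeasurableSpace Yh]
    [MeasurableSpace U₁] [MeasurableSpace U₂] {γ₁ : Y₁ → U₁} {β : Y₁ × U₁ × Yh → U₂}
    (hβ : Measurable β) (hγ₁ : Measurable γ₁) : Measurable (substituteAction γ₁ β) :=
  hβ.comp (measurable_fst.prodMk ((hγ₁.comp measurable_fst).prodMk measurable_snd))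

end SubstituteAction

theorem pbp_static_to_control_sharing_static_general
    {Ω Ω₀ Y₁ Yh U₁ U₂ : Type*}
    [MeasurableSpace Ω] [MeasurableSpace Y₁]
    [MeasurableSpace Yh] [MeasurableSpace U₁] [MeasurableSpace U₂]
    (P : Measure Ω)
    (ω₀ : Ω → Ω₀) (y₁ : Ω → Y₁) (yhat₂ : Ω → Yh)
    (c : Ω₀ × U₁ × U₂ → ℝ≥0∞)
    (JS : (Y₁ → U₁) → (Y₁ × Yh → U₂) → ℝ≥0∞)
    (JCS : (Y₁ → U₁) → (Y₁ × U₁ × Yh → U₂) → ℝ≥0∞)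
    (hJS : ∀ γ₁ δ₂, JS γ₁ δ₂
      = ∫⁻ ω, c (ω₀ ω, γ₁ (y₁ ω), δ₂ (y₁ ω, yhat₂ ω)) ∂P)
    (hJCS : ∀ γ₁ δ₂cs, JCS γ₁ δ₂cs
      = ∫⁻ ω, c (ω₀ ω, γ₁ (y₁ ω), δ₂cs (y₁ ω, γ₁ (y₁ ω), yhat₂ ω)) ∂P)
    (γ₁s : Y₁ → U₁) (δ₂s : Y₁ × Yh → U₂)
    (hγ₁s : Measurable γ₁s)
    (hpbp₁ : ∀ γ₁ : Y₁ → U₁, Measurable γ₁ → JS γ₁s δ₂s ≤ JS γ₁ δ₂s)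
    (hpbp₂ : ∀ δ₂ : Y₁ × Yh → U₂, Measurable δ₂ → JS γ₁s δ₂s ≤ JS γ₁s δ₂) :
    (∀ γ₁ : Y₁ → U₁, Measurable γ₁ →
      JCS γ₁s (fun q => δ₂s (q.1, q.2.2)) ≤ JCS γ₁ (fun q => δ₂s (q.1, q.2.2)))
    ∧ (∀ β : Y₁ × U₁ × Yh → U₂, Measurable β →
      JCS γ₁s (fun q => δ₂s (q.1, q.2.2)) ≤ JCS γ₁s β) := by
  have hJCS_eq_JS : ∀ γ₁ β, JCS γ₁ β = JS γ₁ (substituteAction γ₁ β) := fun γ₁ β => by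
    rw [hJCS, hJS]; rfl
  refine ⟨fun γ₁ hγ₁ => ?_, fun β hβ => ?_⟩
  · simpa only [hJCS_eq_JS, substituteAction_of_ignoring] using hpbp₁ γ₁ hγ₁
  · simpa only [hJCS_eq_JS, substituteAction_of_ignoring] using
      hpbp₂ _ (hβ.substituteAction hγ₁s)

/-- **Theorem 5.2(iii) (two decision makers).** If the static policy `(γ₁s, δ₂s)` is
person-by-person optimal for `JS`, then the control-sharing static policy
`(γ₁s, (y, u, s) ↦ δ₂s (y, s))` (which ignores the shared action) is person-by-person
optimal for `JCS`. -/
theorem pbp_static_to_control_sharing_static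
    {Ω Ω₀ Y₁ Yh U₁ U₂ : Type*}
    [MeasurableSpace Ω] [MeasurableSpace Ω₀] [MeasurableSpace Y₁]
    [MeasurableSpace Yh] [MeasurableSpace U₁] [MeasurableSpace U₂]
    (P : Measure Ω) [IsProbabilityMeasure P]
    (ω₀ : Ω → Ω₀) (y₁ : Ω → Y₁) (yhat₂ : Ω → Yh)
    (hω₀ : Measurable ω₀) (hy₁ : Measurable y₁) (hyhat₂ : Measurable yhat₂)
    (c : Ω₀ × U₁ × U₂ → ℝ≥0∞) (hc : Measurable c)
    (JS : (Y₁ → U₁) → (Y₁ × Yh → U₂) → ℝ≥0∞)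
    (JCS : (Y₁ → U₁) → (Y₁ × U₁ × Yh → U₂) → ℝ≥0∞)
    (hJS : ∀ γ₁ δ₂, JS γ₁ δ₂
      = ∫⁻ ω, c (ω₀ ω, γ₁ (y₁ ω), δ₂ (y₁ ω, yhat₂ ω)) ∂P)
    (hJCS : ∀ γ₁ δ₂cs, JCS γ₁ δ₂cs
      = ∫⁻ ω, c (ω₀ ω, γ₁ (y₁ ω), δ₂cs (y₁ ω, γ₁ (y₁ ω), yhat₂ ω)) ∂P)
    (γ₁s : Y₁ → U₁) (δ₂s : Y₁ × Yh → U₂)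
    (hγ₁s : Measurable γ₁s) (hδ₂s : Measurable δ₂s)
    (hpbp₁ : ∀ γ₁ : Y₁ → U₁, Measurable γ₁ → JS γ₁s δ₂s ≤ JS γ₁ δ₂s)
    (hpbp₂ : ∀ δ₂ : Y₁ × Yh → U₂, Measurable δ₂ → JS γ₁s δ₂s ≤ JS γ₁s δ₂) :
    (∀ γ₁ : Y₁ → U₁, Measurable γ₁ →
      JCS γ₁s (fun q => δ₂s (q.1, q.2.2)) ≤ JCS γ₁ (fun q => δ₂s (q.1, q.2.2)))
    ∧ (∀ β : Y₁ × U₁ × Yh → U₂, Measurable β →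
      JCS γ₁s (fun q => δ₂s (q.1, q.2.2)) ≤ JCS γ₁s β) :=
  pbp_static_to_control_sharing_static_general P ω₀ y₁ yhat₂ c JS JCS hJS hJCS γ₁s δ₂s hγ₁s hpbp₁
    hpbp₂
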